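/- arXiv:1411.6465 — 3 statements merged into one kernel-verified Lean document; each statement's English description precedes it below -/
import Mathlib

section
/- Let (C,T) be a lollipop in a graph G, and let C′ ⊆ C be non-empty and such that G[C′] is connected. Then there is an induced path T′ of G such that (C′,T′) is a licking of (C,T). -/
/-- `t 0, t 1, …, t (k-1)` are the vertices, in order, of an induced path of `G`
with `k` vertices: they are pairwise distinct, and two of them are adjacent exactly
when they are consecutive. -/
def IsInducedPath {V : Type*} (G : SimpleGraph V) (k : ℕ) (t : ℕ → V) : Prop :=
  (∀ i < k, ∀ j < k, t i = t j ↔ i = j) ∧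
  (∀ i < k, ∀ j < k, (G.Adj (t i) (t j) ↔ (i = j + 1 ∨ j = i + 1)))

/-- A lollipop `(C, T)` in `G`: `C ⊆ V(G)`, and `T` is an induced path
`t 0 - t 1 - ⋯ - t (k-1)` with `k ≥ 2` vertices, disjoint from `C`, such that `G[C]`
is connected, the last vertex of `T` has a neighbour in `C`, and no other vertex of
`T` has a neighbour in `C`.  The end of the lollipop is `t 0`. -/
def IsLollipop {V : Type*} (G : SimpleGraph V) (C : Set V) (k : ℕ) (t : ℕ → V) : Prop :=
  2 ≤ k ∧
  IsInducedPath G k t ∧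
  (∀ i < k, t i ∉ C) ∧
  (G.induce C).Connected ∧
  (∃ c ∈ C, G.Adj (t (k - 1)) c) ∧
  (∀ i, i + 1 < k → ∀ c ∈ C, ¬ G.Adj (t i) c)

/-- The lollipop `(C', T')` is a licking of the lollipop `(C, T)`: `C' ⊆ C`, they have
the same end, `T` is a subpath of `T'` (with the same end), and `V(T') ⊆ V(T) ∪ C`. -/
def IsLicking {V : Type*} (G : SimpleGraph V) (C : Set V) (k : ℕ) (t : ℕ → V)
    (C' : Set V) (k' : ℕ) (t' : ℕ → V) : Prop :=
  IsLollipop G C k t ∧ IsLollipop G C' k' t' ∧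
  C' ⊆ C ∧ k ≤ k' ∧ (∀ i < k, t' i = t i) ∧
  (∀ i < k', (∃ j < k, t j = t' i) ∨ t' i ∈ C)

/-- Let (C,T) be a lollipop in G, and let C' ⊆ C be non-empty with G[C'] connected.
Then there is an induced path T' of G such that (C',T') is a licking of (C,T). -/
theorem stmt_3 {V : Type*} [Fintype V] (G : SimpleGraph V) (C : Set V) (k : ℕ)
    (t : ℕ → V) (hCT : IsLollipop G C k t)
    (C' : Set V) (hsub : C' ⊆ C) (hne : C'.Nonempty)
    (hconn : (G.induce C').Connected) :
    ∃ (k' : ℕ) (t' : ℕ → V), IsLicking G C k t C' k' t' := by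
  classical
  obtain ⟨hk, hpath, hdisj, hCconn, ⟨c0, hc0C, hc0adj⟩, hno⟩ := hCT
  have hCT' : IsLollipop G C k t := ⟨hk, hpath, hdisj, hCconn, ⟨c0, hc0C, hc0adj⟩, hno⟩
  by_cases hcase : ∃ c' ∈ C', G.Adj (t (k-1)) c'
  · exact ⟨k, t, hCT', ⟨hk, hpath, (fun i hi hmem => hdisj i hi (hsub hmem)), hconn, hcase,
      fun i hi c' hc' => hno i hi c' (hsub hc')⟩, hsub, le_refl k, fun i _ => rfl,
      fun i hi => Or.inl ⟨i, hi, rfl⟩⟩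
  · push_neg at hcase
    have hGoodEx : ∃ m, ∃ q : ℕ → V, (∀ i ≤ m, q i ∈ C ∧ q i ∉ C') ∧
        G.Adj (t (k-1)) (q 0) ∧
        (∀ i < m, G.Adj (q i) (q (i+1))) ∧ ∃ c' ∈ C', G.Adj (q m) c' := by
      obtain ⟨c1, hc1⟩ := hne
      obtain ⟨w⟩ := hCconn.preconnected ⟨c0, hc0C⟩ ⟨c1, hsub hc1⟩
      have hP : ∃ n, (↑(w.getVert n) : V) ∈ C' :=
        ⟨w.length, by rw [w.getVert_length]; exact hc1⟩
      have hNspec : (↑(w.getVert (Nat.find hP)) : V) ∈ C' := Nat.find_spec hP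
      have hNmin : ∀ n < Nat.find hP, (↑(w.getVert n) : V) ∉ C' :=
        fun n hn => Nat.find_min hP hn
      have hN0 : Nat.find hP ≠ 0 := by
        intro h
        rw [h, w.getVert_zero] at hNspec
        exact hcase c0 hNspec hc0adj
      have hNle : Nat.find hP ≤ w.length := Nat.find_min' hP (by
        rw [w.getVert_length]; exact hc1)
      refine ⟨Nat.find hP - 1, fun i => ↑(w.getVert i), ?_, ?_, ?_, ?_⟩
      · exact fun i hi => ⟨(w.getVert i).2, hNmin i (by omega)⟩
      · show G.Adj (t (k-1)) (↑(w.getVert 0) : V)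
        rw [w.getVert_zero]
        exact hc0adj
      · intro i hi
        exact w.adj_getVert_succ (by omega)
      · refine ⟨↑(w.getVert (Nat.find hP)), hNspec, ?_⟩
        show G.Adj (↑(w.getVert (Nat.find hP - 1)) : V) _
        have h2 := w.adj_getVert_succ (i := Nat.find hP - 1) (by omega)
        rw [show Nat.find hP - 1 + 1 = Nat.find hP by omega] at h2
        exact h2
    set M := Nat.find hGoodEx with hM
    obtain ⟨q, hq, h0, hstep, hlastEx⟩ := Nat.find_spec hGoodEx
    have hmin : ∀ m < M, ¬ (∃ q : ℕ → V, (∀ i ≤ m, q i ∈ C ∧ q i ∉ C') ∧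
        G.Adj (t (k-1)) (q 0) ∧
        (∀ i < m, G.Adj (q i) (q (i+1))) ∧ ∃ c' ∈ C', G.Adj (q m) c') :=
      fun m hm => Nat.find_min hGoodEx hm
    have hqC : ∀ i ≤ M, q i ∈ C := fun i h => (hq i h).1
    have hqC' : ∀ i ≤ M, q i ∉ C' := fun i h => (hq i h).2
    -- no earlier vertex of the walk has a neighbour in C'
    have hnolast : ∀ j < M, ∀ c' ∈ C', ¬ G.Adj (q j) c' := by
      intro j hj c' hc' hadj
      exact hmin j hj ⟨q, fun i hi => hq i (by omega), h0,
        fun i hi => hstep i (by omega), ⟨c', hc', hadj⟩⟩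
    -- no later vertex of the walk is adjacent to t (k-1)
    have hnoadjx : ∀ j, 0 < j → j ≤ M → ¬ G.Adj (t (k-1)) (q j) := by
      intro j hj hjM hadj
      refine hmin (M - j) (by omega) ⟨fun r => q (r + j),
        fun i hi => hq (i + j) (by omega), ?_, ?_, ?_⟩
      · show G.Adj (t (k-1)) (q (0 + j))
        rw [Nat.zero_add]; exact hadj
      · intro i hi
        show G.Adj (q (i + j)) (q (i + 1 + j))
        rw [show i + 1 + j = (i + j) + 1 by omega]
        exact hstep (i + j) (by omega)
      · show ∃ c' ∈ C', G.Adj (q (M - j + j)) c'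
        rw [Nat.sub_add_cancel hjM]; exact hlastEx
    -- shortcut: any chord forces consecutiveness
    have hshort : ∀ i j, i < j → j ≤ M → G.Adj (q i) (q j) → j = i + 1 := by
      intro i j hij hjM hadj
      by_contra hne'
      have hij2 : i + 2 ≤ j := by omega
      refine hmin (i + 1 + (M - j)) (by omega)
        ⟨fun r => if r ≤ i then q r else q (r + (j - i - 1)), ?_, ?_, ?_, ?_⟩
      · intro r hr
        show (if r ≤ i then q r else q (r + (j - i - 1))) ∈ C ∧
          (if r ≤ i then q r else q (r + (j - i - 1))) ∉ C'
        split
        · exact hq r (by omega)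
        · exact hq (r + (j - i - 1)) (by omega)
      · show G.Adj (t (k-1)) (if 0 ≤ i then q 0 else q (0 + (j - i - 1)))
        rw [if_pos (Nat.zero_le i)]; exact h0
      · intro r hr
        show G.Adj (if r ≤ i then q r else q (r + (j - i - 1)))
          (if r + 1 ≤ i then q (r + 1) else q (r + 1 + (j - i - 1)))
        rcases Nat.lt_trichotomy r i with h1 | h1 | h1
        · rw [if_pos (by omega), if_pos (by omega)]; exact hstep r (by omega)
        · subst h1
          rw [if_pos (le_refl r), if_neg (by omega),
            show r + 1 + (j - r - 1) = j by omega]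
          exact hadj
        · rw [if_neg (by omega), if_neg (by omega),
            show r + 1 + (j - i - 1) = (r + (j - i - 1)) + 1 by omega]
          exact hstep (r + (j - i - 1)) (by omega)
      · show ∃ c' ∈ C', G.Adj (if i + 1 + (M - j) ≤ i then q (i + 1 + (M - j))
          else q (i + 1 + (M - j) + (j - i - 1))) c'
        rw [if_neg (by omega), show i + 1 + (M - j) + (j - i - 1) = M by omega]
        exact hlastEx
    -- injectivity of q on [0, M]
    have hinjlt : ∀ i j, i < j → j ≤ M → q i ≠ q j := by
      intro i j hij hjM heq
      refine hmin (i + (M - j)) (by omega)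
        ⟨fun r => if r ≤ i then q r else q (r + (j - i)), ?_, ?_, ?_, ?_⟩
      · intro r hr
        show (if r ≤ i then q r else q (r + (j - i))) ∈ C ∧
          (if r ≤ i then q r else q (r + (j - i))) ∉ C'
        split
        · exact hq r (by omega)
        · exact hq (r + (j - i)) (by omega)
      · show G.Adj (t (k-1)) (if 0 ≤ i then q 0 else q (0 + (j - i)))
        rw [if_pos (Nat.zero_le i)]; exact h0
      · intro r hr
        show G.Adj (if r ≤ i then q r else q (r + (j - i)))
          (if r + 1 ≤ i then q (r + 1) else q (r + 1 + (j - i)))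
        rcases Nat.lt_trichotomy r i with h1 | h1 | h1
        · rw [if_pos (by omega), if_pos (by omega)]; exact hstep r (by omega)
        · subst h1
          rw [if_pos (le_refl r), if_neg (by omega),
            show r + 1 + (j - r) = j + 1 by omega, heq]
          exact hstep j (by omega)
        · rw [if_neg (by omega), if_neg (by omega),
            show r + 1 + (j - i) = (r + (j - i)) + 1 by omega]
          exact hstep (r + (j - i)) (by omega)
      · show ∃ c' ∈ C', G.Adj (if i + (M - j) ≤ i then q (i + (M - j))
          else q (i + (M - j) + (j - i))) c'
        by_cases hLi : i + (M - j) ≤ i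
        · have hMj : M = j := by omega
          rw [if_pos hLi, show i + (M - j) = i by omega, heq, ← hMj]
          exact hlastEx
        · rw [if_neg hLi, show i + (M - j) + (j - i) = M by omega]
          exact hlastEx
    have hinj : ∀ i ≤ M, ∀ j ≤ M, (q i = q j ↔ i = j) := by
      intro i hi j hj
      constructor
      · intro h
        rcases Nat.lt_trichotomy i j with h1 | h1 | h1
        · exact absurd h (hinjlt i j h1 hj)
        · exact h1
        · exact absurd h.symm (hinjlt j i h1 hi)
      · rintro rfl; rfl
    have haq : ∀ a ≤ M, ∀ b ≤ M, (G.Adj (q a) (q b) ↔ (a = b + 1 ∨ b = a + 1)) := by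
      intro a ha b hb
      constructor
      · intro h
        rcases Nat.lt_trichotomy a b with h1 | h1 | h1
        · exact Or.inr (hshort a b h1 hb h)
        · subst h1; exact absurd h (G.irrefl)
        · exact Or.inl (hshort b a h1 ha h.symm)
      · rintro (rfl | rfl)
        · exact (hstep b (by omega)).symm
        · exact hstep a (by omega)
    have hatq : ∀ i < k, ∀ j ≤ M, (G.Adj (t i) (q j) ↔ (i = k - 1 ∧ j = 0)) := by
      intro i hi j hj
      constructor
      · intro h
        by_cases hik : i + 1 < k
        · exact absurd h (hno i hik (q j) (hqC j hj))
        · have hik1 : i = k - 1 := by omega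
          refine ⟨hik1, ?_⟩
          by_contra hj0
          exact hnoadjx j (by omega) hj (hik1 ▸ h)
      · rintro ⟨rfl, rfl⟩
        exact h0
    have htq : ∀ i < k, ∀ j ≤ M, t i ≠ q j :=
      fun i hi j hj h => hdisj i hi (h ▸ hqC j hj)
    refine ⟨k + M + 1, fun i => if i < k then t i else q (i - k),
      hCT', ⟨by omega, ⟨?_, ?_⟩, ?_, hconn, ?_, ?_⟩, hsub, by omega,
      fun i hi => if_pos hi, ?_⟩
    · -- distinctness
      intro i hi j hj
      show (if i < k then t i else q (i - k)) = (if j < k then t j else q (j - k)) ↔ i = j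
      constructor
      · intro h
        by_cases h1 : i < k <;> by_cases h2 : j < k
        · rw [if_pos h1, if_pos h2] at h
          exact (hpath.1 i h1 j h2).mp h
        · rw [if_pos h1, if_neg h2] at h
          exact absurd h (htq i h1 (j - k) (by omega))
        · rw [if_neg h1, if_pos h2] at h
          exact absurd h.symm (htq j h2 (i - k) (by omega))
        · rw [if_neg h1, if_neg h2] at h
          have := (hinj (i - k) (by omega) (j - k) (by omega)).mp h
          omega
      · rintro rfl; rfl
    · -- induced adjacency
      intro i hi j hj
      show G.Adj (if i < k then t i else q (i - k)) (if j < k then t j else q (j - k)) ↔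
        (i = j + 1 ∨ j = i + 1)
      by_cases h1 : i < k <;> by_cases h2 : j < k
      · rw [if_pos h1, if_pos h2]; exact hpath.2 i h1 j h2
      · rw [if_pos h1, if_neg h2, hatq i h1 (j - k) (by omega)]; omega
      · rw [if_neg h1, if_pos h2]
        constructor
        · intro h
          have := (hatq j h2 (i - k) (by omega)).mp h.symm
          omega
        · intro h
          have h3 : j = k - 1 ∧ i - k = 0 := by omega
          exact ((hatq j h2 (i - k) (by omega)).mpr h3).symm
      · rw [if_neg h1, if_neg h2, haq (i - k) (by omega) (j - k) (by omega)]; omega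
    · -- vertices avoid C'
      intro i hi
      show (if i < k then t i else q (i - k)) ∉ C'
      split
      · exact fun h => hdisj i (by assumption) (hsub h)
      · exact hqC' (i - k) (by omega)
    · -- last vertex has a neighbour in C'
      show ∃ c ∈ C', G.Adj (if k + M + 1 - 1 < k then t (k + M + 1 - 1)
        else q (k + M + 1 - 1 - k)) c
      rw [if_neg (by omega), show k + M + 1 - 1 - k = M by omega]
      exact hlastEx
    · -- no other vertex has a neighbour in C'
      intro i hi c' hc'
      show ¬ G.Adj (if i < k then t i else q (i - k)) c'
      by_cases h1 : i < k
      · rw [if_pos h1]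
        by_cases h2 : i + 1 < k
        · exact hno i h2 c' (hsub hc')
        · have h3 : i = k - 1 := by omega
          rw [h3]
          exact hcase c' hc'
      · rw [if_neg h1]
        exact hnolast (i - k) (by omega) c' hc'
    · -- covering condition
      intro i hi
      by_cases h1 : i < k
      · exact Or.inl ⟨i, h1, (if_pos h1).symm⟩
      · refine Or.inr ?_
        show (if i < k then t i else q (i - k)) ∈ C
        rw [if_neg h1]
        exact hqC (i - k) (by omega)
end

section
/- Let φ: ℕ → ℕ be a non-decreasing function, and let G be a triangle-free φ-balled graph with χ(G) > φ(1). Then G has a 5-hole. -/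
/-- `G` has an induced cycle of length `n`. -/
def HasInducedCycle {V : Type*} (G : SimpleGraph V) (n : ℕ) : Prop :=
  Nonempty (SimpleGraph.cycleGraph n ↪g G)

/-- For a non-decreasing `φ : ℕ → ℕ`, a graph `G` is φ-balled if for every non-null
induced subgraph `H = G[W]` of `G` there is a vertex `v` of `H` with
`χ(H) ≤ φ(χ(N²_H(v)))`, where `N²_H(v)` is the set of vertices of `H` at distance
exactly 2 from `v` in `H`. -/
def PhiBalled {V : Type*} (φ : ℕ → ℕ) (G : SimpleGraph V) : Prop :=
  ∀ W : Set V, W.Nonempty → ∃ v : W,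
    (G.induce W).chromaticNumber ≤
      (φ (((G.induce W).induce
        {u : W | (G.induce W).dist v u = 2}).chromaticNumber.toNat) : ℕ∞)

/-!
Apply φ-balledness to `G` itself to get a vertex `v`. If `N²(v)` were stable, then
`χ(G) ≤ φ(χ(N²(v))) ≤ φ(1)`; so `N²(v)` contains an edge `xy`. Choosing common neighbours
`a` of `v, x` and `b` of `v, y`, triangle-freeness forces `v a x y b` to be a 5-hole.
-/

section

open SimpleGraph

variable {V W : Type*} {G : SimpleGraph V}

theorem HasInducedCycle.map {H : SimpleGraph W} {n : ℕ} (f : G ↪g H)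
    (h : HasInducedCycle G n) : HasInducedCycle H n :=
  Nonempty.map f.comp h

theorem SimpleGraph.edist_eq_two_of_dist_eq_two {u v : V} (h : G.dist u v = 2) :
    G.edist u v = 2 := by
  have hreach := (dist_ne_zero_iff_ne_and_reachable.mp (by omega : G.dist u v ≠ 0)).2
  rw [← hreach.coe_dist_eq_edist, h]
  rfl

theorem SimpleGraph.Colorable.chromaticNumber_toNat_le {n : ℕ} (h : G.Colorable n) :
    G.chromaticNumber.toNat ≤ n :=
  ENat.toNat_le_of_le_natCast h.chromaticNumber_le

theorem hasInducedCycle_five {a b c d e : V}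
    (hab : G.Adj a b) (hbc : G.Adj b c) (hcd : G.Adj c d) (hde : G.Adj d e) (hea : G.Adj e a)
    (hac : ¬ G.Adj a c) (had : ¬ G.Adj a d) (hbd : ¬ G.Adj b d) (hbe : ¬ G.Adj b e)
    (hce : ¬ G.Adj c e) : HasInducedCycle G 5 := by
  let f : Fin 5 → V := ![a, b, c, d, e]
  have hf : ∀ i j, G.Adj (f i) (f j) ↔ (cycleGraph 5).Adj i j := by
    intro i j
    fin_cases i <;> fin_cases j <;>
      simp +decide [f, *, hab.symm, hbc.symm, hcd.symm, hde.symm, hea.symm, mt Adj.symm hac,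
        mt Adj.symm had, mt Adj.symm hbd, mt Adj.symm hbe, mt Adj.symm hce]
  -- Distinct vertices of `C₅` have distinct neighbourhoods, so `f` is injective.
  have hinj : Function.Injective f := by
    intro i j hij
    have hnbr : ∀ k, (cycleGraph 5).Adj k i ↔ (cycleGraph 5).Adj k j := by
      intro k
      rw [← hf, ← hf, hij]
    clear hij
    revert i j
    decide
  exact ⟨⟨⟨f, hinj⟩, hf _ _⟩⟩

theorem hasInducedCycle_five_of_adj_of_dist_eq_two (htf : G.CliqueFree 3) {v x y : V}
    (hxy : G.Adj x y) (hx : G.dist v x = 2) (hy : G.dist v y = 2) : HasInducedCycle G 5 := by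
  obtain ⟨-, hvx, a, hva, hxa⟩ := edist_eq_two_iff.mp (edist_eq_two_of_dist_eq_two hx)
  obtain ⟨-, hvy, b, hvb, hyb⟩ := edist_eq_two_iff.mp (edist_eq_two_of_dist_eq_two hy)
  have triangle {p q r : V} (hpq : G.Adj p q) (hpr : G.Adj p r) (hqr : G.Adj q r) : False :=
    isIndepSet_neighborSet_of_triangleFree G htf p hpq hpr hqr.ne hqr
  exact hasInducedCycle_five hva hxa.symm hxy hyb hvb.symm hvx hvy
    (fun hay ↦ triangle hxa.symm hay hxy) (fun hab ↦ triangle hva hvb hab)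
    (fun hxb ↦ triangle hxy.symm hyb hxb)

end

theorem stmt_18_general {V : Type*} (φ : ℕ → ℕ) (hφ : Monotone φ)
    (G : SimpleGraph V) (htf : G.CliqueFree 3) (hball : PhiBalled φ G)
    (hchi : (φ 1 : ℕ∞) < G.chromaticNumber) :
    HasInducedCycle G 5 := by
  have : Nonempty V := by
    by_contra hV
    simp [not_nonempty_iff.mp hV] at hchi
  obtain ⟨v, hv⟩ := hball Set.univ Set.univ_nonempty
  set H := G.induce Set.univ
  set S := {u | H.dist v u = 2}
  have hedge : H.induce S ≠ ⊥ := by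
    intro hbot
    have hS : (H.induce S).chromaticNumber.toNat ≤ 1 :=
      (SimpleGraph.colorable_one_iff.mpr hbot).chromaticNumber_toNat_le
    refine hchi.not_ge ?_
    calc G.chromaticNumber = H.chromaticNumber :=
          (SimpleGraph.chromaticNumber_congr G.induceUnivIso).symm
      _ ≤ _ := hv
      _ ≤ φ 1 := by exact_mod_cast hφ hS
  obtain ⟨⟨x, hx⟩, ⟨y, hy⟩, hxy⟩ := SimpleGraph.ne_bot_iff_exists_adj.mp hedge
  have htfH : H.CliqueFree 3 := htf.comap ⟨G.induceUnivIso.toEmbedding.toCopy⟩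
  exact (hasInducedCycle_five_of_adj_of_dist_eq_two htfH hxy hx hy).map
    G.induceUnivIso.toEmbedding

/-- Let φ : ℕ → ℕ be non-decreasing, and let G be a triangle-free φ-balled graph with
χ(G) > φ(1).  Then G has a 5-hole. -/
theorem stmt_18 {V : Type*} [Fintype V] (φ : ℕ → ℕ) (hφ : Monotone φ)
    (G : SimpleGraph V) (htf : G.CliqueFree 3) (hball : PhiBalled φ G)
    (hchi : (φ 1 : ℕ∞) < G.chromaticNumber) :
    HasInducedCycle G 5 :=
  stmt_18_general φ hφ G htf hball hchi
end

section
/- Let G be a graph with no 5-hole and with ω(G) ≥ 2, and let n ≥ 1 be an integer such that every induced subgraph H of G with ω(H) < ω(G) satisfies χ(H) ≤ n. Then for every vertex v of G, χ(N(v)) ≤ n and χ(N²(v)) ≤ n². -/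
/-- The set of vertices of `G` at distance exactly `r` from `v`. -/
def distSet {V : Type*} (G : SimpleGraph V) (v : V) (r : ℕ) : Set V :=
  {u | G.dist v u = r}

open scoped Finset

namespace SimpleGraph

variable {V : Type*} {G : SimpleGraph V}

lemma cliqueNum_induce_lt [Finite V] {W : Set V}
    (h : ∀ s : Finset V, ↑s ⊆ W → G.IsClique (s : Set V) → ∃ w, ∀ x ∈ s, G.Adj w x) :
    (G.induce W).cliqueNum < G.cliqueNum := by
  classical
  obtain ⟨s, hs⟩ := (G.induce W).exists_isNClique_cliqueNum
  rw [isNClique_induce_iff] at hs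
  obtain ⟨w, hw⟩ := h _ (by simp) hs.isClique
  have := (hs.insert hw).isClique.card_le_cliqueNum
  rw [(hs.insert hw).card_eq] at this
  omega

lemma colorable_induce_of_colorable_fibers {D : Set V} {ι : Type*} [Fintype ι] (f : V → ι)
    {k : ℕ} (h : ∀ i, (G.induce {x | x ∈ D ∧ f x = i}).Colorable k) :
    (G.induce D).Colorable (Fintype.card ι * k) := by
  let C i := (h i).some
  have hC : ∀ {i j} (hij : i = j) (x : V) hi hj, C i ⟨x, hi⟩ = C j ⟨x, hj⟩ := by
    rintro i _ rfl; intros; rfl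
  let C' : (G.induce D).Coloring (ι × Fin k) :=
    Coloring.mk (fun x ↦ (f x, C (f x) ⟨x, x.2, rfl⟩)) fun {x y} hxy heq ↦ by
      obtain ⟨hf, hc⟩ := Prod.mk.inj heq
      exact (C (f x)).valid
        (show (G.induce {z | z ∈ D ∧ f z = f x}).Adj ⟨x, x.2, rfl⟩ ⟨y, y.2, hf.symm⟩ from hxy)
        (hc.trans (hC hf.symm _ _ _))
  simpa using C'.colorable

lemma exists_fun_of_coloring_induce {S : Set V} {α : Type*} [Nonempty α]
    (C : (G.induce S).Coloring α) : ∃ c : V → α, ∀ a ∈ S, ∀ b ∈ S, G.Adj a b → c a ≠ c b := by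
  classical
  refine ⟨fun z ↦ if h : z ∈ S then C ⟨z, h⟩ else Classical.arbitrary α, fun a ha b hb hab ↦ ?_⟩
  simpa [dif_pos ha, dif_pos hb] using C.valid (show (G.induce S).Adj ⟨a, ha⟩ ⟨b, hb⟩ from hab)

lemma hasInducedCycle_five {a b c d e : V}
    (hab : G.Adj a b) (hbc : G.Adj b c) (hcd : G.Adj c d) (hde : G.Adj d e) (hea : G.Adj e a)
    (hac : ¬G.Adj a c) (had : ¬G.Adj a d) (hbd : ¬G.Adj b d) (hbe : ¬G.Adj b e)
    (hce : ¬G.Adj c e) : HasInducedCycle G 5 := by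
  set f : Fin 5 → V := ![a, b, c, d, e]
  have hf : ∀ i j, G.Adj (f i) (f j) ↔ (cycleGraph 5).Adj i j := by
    intro i j
    fin_cases i <;> fin_cases j <;>
      simp +decide [f, G.adj_comm, hea.symm, *]
  -- distinct vertices of the 5-cycle have distinct neighbourhoods
  have hsep : ∀ i j : Fin 5, i ≠ j → ∃ k, (cycleGraph 5).Adj i k ∧ ¬(cycleGraph 5).Adj j k := by
    decide
  have hinj : f.Injective := by
    intro i j hij
    by_contra hne
    obtain ⟨k, hik, hjk⟩ := hsep i j hne
    exact hjk ((hf j k).1 (hij ▸ (hf i k).2 hik))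
  exact ⟨⟨⟨f, hinj⟩, hf _ _⟩⟩

lemma adj_of_not_hasInducedCycle_five (h5 : ¬HasInducedCycle G 5) {v a b x y : V}
    (hva : G.Adj v a) (hvb : G.Adj v b) (hab : ¬G.Adj a b) (hvx : ¬G.Adj v x)
    (hvy : ¬G.Adj v y) (hax : G.Adj a x) (hby : G.Adj b y) (hxy : G.Adj x y)
    (hay : ¬G.Adj a y) : G.Adj b x := by
  by_contra hbx
  exact h5 <| hasInducedCycle_five hva hax hxy hby.symm hvb.symm hvx hvy hay hab
    fun h ↦ hbx h.symm

lemma exists_forall_adj_of_isClique (h5 : ¬HasInducedCycle G 5) {v : V} {p : V → V}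
    {s : Finset V} (hs : G.IsClique (s : Set V)) (hne : s.Nonempty)
    (hvs : ∀ x ∈ s, ¬G.Adj v x) (hvp : ∀ x ∈ s, G.Adj v (p x)) (hps : ∀ x ∈ s, G.Adj (p x) x)
    (hpp : ∀ x ∈ s, ∀ y ∈ s, ¬G.Adj (p x) (p y)) :
    ∃ x ∈ s, ∀ y ∈ s, G.Adj (p x) y := by
  classical
  obtain ⟨x, hx, hmax⟩ := s.exists_max_image (fun z ↦ #{y ∈ s | G.Adj (p z) y}) hne
  refine ⟨x, hx, ?_⟩
  by_contra! ⟨y, hy, hxy⟩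
  -- every neighbour of `p x` in `s` is also one of `p y`, else `v, p x, z, y, p y` is a 5-hole
  have hsub : insert y {z ∈ s | G.Adj (p x) z} ⊆ {z ∈ s | G.Adj (p y) z} := by
    refine Finset.insert_subset (Finset.mem_filter.2 ⟨hy, hps y hy⟩) fun z hz ↦ ?_
    obtain ⟨hz, hxz⟩ := Finset.mem_filter.1 hz
    have hzy : G.Adj z y := hs hz hy fun h ↦ hxy (h ▸ hxz)
    exact Finset.mem_filter.2 ⟨hz, adj_of_not_hasInducedCycle_five h5 (hvp x hx) (hvp y hy)
      (hpp x hx y hy) (hvs z hz) (hvs y hy) hxz (hps y hy) hzy hxy⟩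
  have hcard := Finset.card_le_card hsub
  rw [Finset.card_insert_of_notMem fun h ↦ hxy (Finset.mem_filter.1 h).2] at hcard
  exact (hmax y hy).not_gt (Nat.lt_of_succ_le hcard)

lemma mem_distSet_two_iff {v u : V} :
    u ∈ distSet G v 2 ↔ v ≠ u ∧ ¬G.Adj v u ∧ (G.commonNeighbors v u).Nonempty :=
  (ENat.toNat_eq_iff two_ne_zero).trans edist_eq_two_iff

lemma exists_parent_of_mem_distSet_two (v : V) :
    ∃ p : V → V, ∀ u ∈ distSet G v 2, G.Adj v (p u) ∧ G.Adj (p u) u := by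
  have : ∀ u, ∃ w, u ∈ distSet G v 2 → G.Adj v w ∧ G.Adj w u := fun u ↦ by
    by_cases hu : u ∈ distSet G v 2
    · obtain ⟨w, hw⟩ := (mem_distSet_two_iff.1 hu).2.2
      rw [mem_commonNeighbors] at hw
      exact ⟨w, fun _ ↦ ⟨hw.1, hw.2.symm⟩⟩
    · exact ⟨v, fun h ↦ (hu h).elim⟩
  choose p hp using this
  exact ⟨p, hp⟩

lemma cliqueNum_induce_neighborSet_lt [Finite V] (v : V) :
    (G.induce (G.neighborSet v)).cliqueNum < G.cliqueNum :=
  cliqueNum_induce_lt fun _ hs _ ↦ ⟨v, fun _ hx ↦ hs hx⟩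

lemma cliqueNum_induce_lt_of_not_adj_parents [Finite V] (h5 : ¬HasInducedCycle G 5) {v : V}
    {p : V → V} (hp : ∀ u ∈ distSet G v 2, G.Adj v (p u) ∧ G.Adj (p u) u) {W : Set V}
    (hW : W ⊆ distSet G v 2) (hpW : ∀ x ∈ W, ∀ y ∈ W, ¬G.Adj (p x) (p y)) :
    (G.induce W).cliqueNum < G.cliqueNum := by
  refine cliqueNum_induce_lt fun s hs hcl ↦ ?_
  obtain rfl | hne := s.eq_empty_or_nonempty
  · exact ⟨v, by simp⟩
  have hD : ∀ x ∈ s, x ∈ distSet G v 2 := fun x hx ↦ hW (hs hx)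
  obtain ⟨x, -, hx⟩ := exists_forall_adj_of_isClique h5 hcl hne
    (fun x hx ↦ (mem_distSet_two_iff.1 (hD x hx)).2.1) (fun x hx ↦ (hp x (hD x hx)).1)
    (fun x hx ↦ (hp x (hD x hx)).2) fun x hx y hy ↦ hpW x (hs hx) y (hs hy)
  exact ⟨p x, hx⟩

end SimpleGraph

open SimpleGraph

theorem stmt_19_general {V : Type*} [Fintype V] (G : SimpleGraph V) (n : ℕ)
    (h5 : ¬ HasInducedCycle G 5)
    (hn : 1 ≤ n)
    (hind : ∀ W : Set V, (G.induce W).cliqueNum < G.cliqueNum →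
      (G.induce W).chromaticNumber ≤ n)
    (v : V) :
    (G.induce (G.neighborSet v)).chromaticNumber ≤ n ∧
      (G.induce (distSet G v 2)).chromaticNumber ≤ (n ^ 2 : ℕ) := by
  have hN : (G.induce (G.neighborSet v)).chromaticNumber ≤ n :=
    hind _ (cliqueNum_induce_neighborSet_lt v)
  refine ⟨hN, ?_⟩
  have : Nonempty (Fin n) := Fin.pos_iff_nonempty.1 hn
  obtain ⟨c, hc⟩ := exists_fun_of_coloring_induce (chromaticNumber_le_iff_colorable.1 hN).some
  obtain ⟨p, hp⟩ := exists_parent_of_mem_distSet_two (G := G) v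
  have hfib : ∀ i, (G.induce {u | u ∈ distSet G v 2 ∧ c (p u) = i}).Colorable n := fun i ↦
    chromaticNumber_le_iff_colorable.1 <| hind _ <|
      cliqueNum_induce_lt_of_not_adj_parents h5 hp (fun _ hu ↦ hu.1)
        fun x hx y hy hxy ↦ hc _ (hp x hx.1).1 _ (hp y hy.1).1 hxy (hx.2.trans hy.2.symm)
  simpa [sq] using (colorable_induce_of_colorable_fibers (c ∘ p) hfib).chromaticNumber_le

/-- Let G have no 5-hole and ω(G) ≥ 2, and let n ≥ 1 be such that every induced
subgraph H of G with ω(H) < ω(G) satisfies χ(H) ≤ n. Then for every vertex v,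
χ(N(v)) ≤ n and χ(N²(v)) ≤ n². -/
theorem stmt_19 {V : Type*} [Fintype V] (G : SimpleGraph V) (n : ℕ)
    (h5 : ¬ HasInducedCycle G 5)
    (hω : 2 ≤ G.cliqueNum)
    (hn : 1 ≤ n)
    (hind : ∀ W : Set V, (G.induce W).cliqueNum < G.cliqueNum →
      (G.induce W).chromaticNumber ≤ n)
    (v : V) :
    (G.induce (G.neighborSet v)).chromaticNumber ≤ n ∧
      (G.induce (distSet G v 2)).chromaticNumber ≤ (n ^ 2 : ℕ) :=
  stmt_19_general G n h5 hn hind v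
end
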